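/- Let V be a 4-dimensional real vector space with a nondegenerate symmetric bilinear form g, and let DR, DT : V → Sym²(V*) be linear maps with scalar traces dR(j) = tr_g(DR_j), dT(j) = tr_g(DT_j). Define H(j,k,l) = DR_j(k,l) + DR_k(l,j) + DR_l(j,k) − (1/3)[g(k,l)dR(j) + g(l,j)dR(k) + g(j,k)dR(l)] and T(j,k,l) = DT_j(k,l) + DT_k(l,j) + DT_l(j,k) − (1/6)[g(k,l)dT(j) + g(l,j)dT(k) + g(j,k)dT(l)]. Assume the contracted second Bianchi identity: for all l ∈ V, the contraction g^{jk}DR_j(k,l) of DR over its first two slots with the inverse of g equals (1/2)dR(l). If H(j,k,l) = T(j,k,l) for all j,k,l ∈ V, then the stress-energy tensor is divergence-free: g^{jk}DT_j(k,l) = 0 for all l ∈ V. -/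

import Mathlib

open LinearMap (BilinForm)

/-- The trace of a bilinear form `B` with respect to a nondegenerate bilinear form `g`. -/
noncomputable def traceG {V : Type*} [AddCommGroup V] [Module ℝ V] [FiniteDimensional ℝ V]
    (g : BilinForm ℝ V) (hg : g.Nondegenerate) (B : BilinForm ℝ V) : ℝ :=
  LinearMap.trace ℝ V (((LinearMap.BilinForm.toDual g hg).symm : Module.Dual ℝ V →ₗ[ℝ] V) ∘ₗ B)

/-- The divergence `g^{jk} D_j(k,l)`: the contraction of the trilinear form
`(j,k) ↦ D_j(k,l)` over its first two slots with the inverse of `g`. -/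
noncomputable def divG {V : Type*} [AddCommGroup V] [Module ℝ V] [FiniteDimensional ℝ V]
    (g : BilinForm ℝ V) (hg : g.Nondegenerate)
    (D : V →ₗ[ℝ] BilinForm ℝ V) (l : V) : ℝ :=
  traceG g hg ((LinearMap.lflip.toLinearMap ∘ₗ D).flip l)

/-! Contracting the field equation `H = T` over `(j, k)` with `g⁻¹`: the symmetry of `g` and of
each `DR_j` makes both cyclic terms `DR_j(k,l)` and `DR_k(l,j)` contract to the divergence, while
the third one and the three trace terms all contract to multiples of `dR(l)`. In dimension `n`
this gives `2 div DR - (c(n+2) - 1) dR = 2 div DT - (c'(n+2) - 1) dT`; for `n = 4` the weights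
`c = 1/3`, `c' = 1/6` turn the left side into twice the Bianchi defect and make `dT` drop out. -/

section TraceG

open LinearMap.BilinForm

variable {V : Type*} [AddCommGroup V] [Module ℝ V] [FiniteDimensional ℝ V]
  (g : BilinForm ℝ V) (hg : g.Nondegenerate)

noncomputable def traceGₗ : BilinForm ℝ V →ₗ[ℝ] ℝ :=
  LinearMap.trace ℝ V ∘ₗ
    LinearMap.llcomp ℝ V (Module.Dual ℝ V) V ((g.toDual hg).symm : Module.Dual ℝ V →ₗ[ℝ] V)

theorem traceGₗ_apply (B : BilinForm ℝ V) : traceGₗ g hg B = traceG g hg B := rfl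

theorem traceG_add (B C : BilinForm ℝ V) :
    traceG g hg (B + C) = traceG g hg B + traceG g hg C :=
  map_add (traceGₗ g hg) B C

theorem traceG_sub (B C : BilinForm ℝ V) :
    traceG g hg (B - C) = traceG g hg B - traceG g hg C :=
  map_sub (traceGₗ g hg) B C

theorem traceG_smul (c : ℝ) (B : BilinForm ℝ V) : traceG g hg (c • B) = c * traceG g hg B :=
  map_smul (traceGₗ g hg) c B

theorem traceG_self : traceG g hg g = Module.finrank ℝ V := by
  have h : ((g.toDual hg).symm : Module.Dual ℝ V →ₗ[ℝ] V) ∘ₗ g = LinearMap.id :=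
    LinearMap.ext (g.toDual hg).symm_apply_apply
  rw [traceG, h, LinearMap.trace_id]

theorem traceG_smulRight (c d : Module.Dual ℝ V) :
    traceG g hg (c.smulRight d) = c ((g.toDual hg).symm d) := by
  have h : ((g.toDual hg).symm : Module.Dual ℝ V →ₗ[ℝ] V) ∘ₗ c.smulRight d =
      c.smulRight ((g.toDual hg).symm d) := by
    ext v; simp
  rw [traceG, h, LinearMap.trace_smulRight]

theorem traceG_smulRight_apply_right (c : Module.Dual ℝ V) (l : V) :
    traceG g hg (c.smulRight (g l)) = c l := by
  rw [traceG_smulRight]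
  exact congrArg c ((g.toDual hg).symm_apply_apply l)

theorem traceG_apply_smulRight (hgsymm : g.IsSymm) (d : Module.Dual ℝ V) (l : V) :
    traceG g hg ((g l).smulRight d) = d l := by
  rw [traceG_smulRight, hgsymm.eq, apply_toDual_symm_apply]

theorem traceG_flip (hgsymm : g.IsSymm) (B : BilinForm ℝ V) :
    traceG g hg (LinearMap.flip B) = traceG g hg B := by
  set φ : Module.Dual ℝ V →ₗ[ℝ] V := (g.toDual hg).symm.toLinearMap
  set f : V →ₗ[ℝ] V := φ ∘ₗ B
  -- `B y x = g (f y) x = g x (f y)`, so `B.flip` is the transpose of `f` transported by `g`.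
  have hflip : LinearMap.flip B = f.dualMap ∘ₗ g := by
    ext x y
    simp [f, φ, hgsymm.eq x, apply_toDual_symm_apply]
  have hgφ : (g : V →ₗ[ℝ] Module.Dual ℝ V) ∘ₗ φ = LinearMap.id :=
    LinearMap.ext fun c => LinearMap.ext fun y => apply_toDual_symm_apply c y
  calc traceG g hg (LinearMap.flip B)
      = LinearMap.trace ℝ (Module.Dual ℝ V) ((f.dualMap ∘ₗ g) ∘ₗ φ) := by
        rw [traceG, hflip, LinearMap.trace_comp_comm']
    _ = traceG g hg B := by
        rw [LinearMap.comp_assoc, hgφ, LinearMap.comp_id, LinearMap.dualMap_def,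
          LinearMap.trace_transpose']
        rfl

end TraceG

section Harada

variable {V : Type*} [AddCommGroup V] [Module ℝ V]

/-- With `δ = dR`, `c = 1/3` this is Harada's tensor `H(·,·,l)`; with `δ = dT`, `c = 1/6` it is
`T(·,·,l)`. -/
noncomputable def haradaForm (g : BilinForm ℝ V) (D : V →ₗ[ℝ] BilinForm ℝ V)
    (δ : Module.Dual ℝ V) (c : ℝ) (l : V) : BilinForm ℝ V :=
  (LinearMap.lflip.toLinearMap ∘ₗ D).flip l + LinearMap.flip (D.flip l) + D l
    - c • (δ.smulRight (LinearMap.flip g l) + (g l).smulRight δ + δ l • g)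

theorem haradaForm_apply (g : BilinForm ℝ V) (D : V →ₗ[ℝ] BilinForm ℝ V)
    (δ : Module.Dual ℝ V) (c : ℝ) (j k l : V) :
    haradaForm g D δ c l j k = D j k l + D k l j + D l j k
      - c * (g k l * δ j + g l j * δ k + g j k * δ l) := by
  simp only [haradaForm, LinearMap.sub_apply, LinearMap.add_apply, LinearMap.smul_apply,
    LinearMap.flip_apply, LinearMap.comp_apply, LinearMap.lflip_apply,
    LinearMap.smulRight_apply, LinearEquiv.coe_coe, smul_eq_mul]
  ring

theorem traceG_haradaForm [FiniteDimensional ℝ V]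
    (g : BilinForm ℝ V) (hgsymm : g.IsSymm) (hg : g.Nondegenerate)
    (D : V →ₗ[ℝ] BilinForm ℝ V) (hD : ∀ j, (D j).IsSymm) (c : ℝ) (l : V) :
    traceG g hg (haradaForm g D (traceGₗ g hg ∘ₗ D) c l) =
      2 * divG g hg D l + (1 - c * (Module.finrank ℝ V + 2)) * traceG g hg (D l) := by
  have hdiv : traceG g hg ((LinearMap.lflip.toLinearMap ∘ₗ D).flip l) = divG g hg D l := rfl
  have hdiv' : traceG g hg (LinearMap.flip (D.flip l)) = divG g hg D l := by
    rw [traceG_flip g hg hgsymm, ← hdiv]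
    congr 1
    ext j k
    exact (hD j).eq l k
  have hgl : LinearMap.flip g l = g l := by
    ext k
    exact hgsymm.eq k l
  simp only [haradaForm, hgl, traceG_add, traceG_sub, traceG_smul, hdiv, hdiv',
    traceG_smulRight_apply_right, traceG_apply_smulRight g hg hgsymm, traceG_self,
    LinearMap.comp_apply, traceGₗ_apply]
  ring

end Harada

/-- Given the contracted second Bianchi identity `g^{jk} ∇_j R_{kl} = (1/2) ∇_l R`,
Harada's field equation `H_{jkl} = T_{jkl}` implies the conservation law
`g^{jk} ∇_j T_{kl} = 0`. -/
theorem harada_implies_conservation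
    {V : Type*} [AddCommGroup V] [Module ℝ V] [FiniteDimensional ℝ V]
    (hdim : Module.finrank ℝ V = 4)
    (g : BilinForm ℝ V) (hgsymm : g.IsSymm) (hg : g.Nondegenerate)
    (DR DT : V →ₗ[ℝ] BilinForm ℝ V)
    (hDRsymm : ∀ j, (DR j).IsSymm) (hDTsymm : ∀ j, (DT j).IsSymm)
    (dR : V → ℝ) (hdR : ∀ j, dR j = traceG g hg (DR j))
    (dT : V → ℝ) (hdT : ∀ j, dT j = traceG g hg (DT j))
    (H T : V → V → V → ℝ)
    (hH : ∀ j k l, H j k l = DR j k l + DR k l j + DR l j k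
      - (1/3) * (g k l * dR j + g l j * dR k + g j k * dR l))
    (hT : ∀ j k l, T j k l = DT j k l + DT k l j + DT l j k
      - (1/6) * (g k l * dT j + g l j * dT k + g j k * dT l))
    (hBianchi : ∀ l, divG g hg DR l = (1/2) * dR l)
    (hfield : ∀ j k l, H j k l = T j k l) :
    ∀ l, divG g hg DT l = 0 := by
  intro l
  obtain rfl : dR = traceGₗ g hg ∘ₗ DR := funext hdR
  obtain rfl : dT = traceGₗ g hg ∘ₗ DT := funext hdT
  have hforms : haradaForm g DR (traceGₗ g hg ∘ₗ DR) (1/3) l =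
      haradaForm g DT (traceGₗ g hg ∘ₗ DT) (1/6) l := by
    ext j k
    rw [haradaForm_apply, haradaForm_apply, ← hH, ← hT, hfield]
  have htrace := congrArg (traceG g hg) hforms
  rw [traceG_haradaForm g hgsymm hg DR hDRsymm, traceG_haradaForm g hgsymm hg DT hDTsymm,
    hdim, hBianchi, ← hdR, ← hdT] at htrace
  linarith
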